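/- arXiv:2203.14566 — 2 statements merged into one kernel-verified Lean document; each statement's English description precedes it below -/
import Mathlib

section
/- For every rational number p/q with p/q ≤ 1/3 (p, q positive integers, p < q), there is no simple planar connected graph G with dep(G) = p/q. -/
/-!
If every edge of a connected graph on `n` vertices has spanning tree density at most `1/3`,
Foster's formula `∑ₑ d(e) = n - 1` forces at least `3(n - 1)` edges. Such a graph has a `K₅`
minor (Mader): after deleting edges down to exactly `3n - 3`, some vertex `v` has degree at most
`5`. If an edge `uv` lies in at most two triangles, contracting it loses at most three edges and
we induct. Otherwise `N(v)` has `4` or `5` vertices, each adjacent to all but at most one other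
vertex of `N(v)`, and `v` together with `N(v)` contracts to `K₅`. A `K₅` minor contradicts
planarity.
-/

open SimpleGraph

namespace STED

/-- `T` is (the edge set of) a spanning tree of `G`. -/
def IsSpanningTree {V : Type*} (G : SimpleGraph V) (T : Set (Sym2 V)) : Prop :=
  T ⊆ G.edgeSet ∧ (SimpleGraph.fromEdgeSet T).IsTree

/-- the number of spanning trees of `G` -/
noncomputable def tau {V : Type*} (G : SimpleGraph V) : ℕ :=
  {T : Set (Sym2 V) | IsSpanningTree G T}.ncard

/-- the number of spanning trees of `G` containing the edge `e` -/
noncomputable def tauEdge {V : Type*} (G : SimpleGraph V) (e : Sym2 V) : ℕ :=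
  {T : Set (Sym2 V) | IsSpanningTree G T ∧ e ∈ T}.ncard

/-- the spanning tree edge density of `e` in `G` -/
noncomputable def density {V : Type*} (G : SimpleGraph V) (e : Sym2 V) : ℚ :=
  (tauEdge G e : ℚ) / (tau G : ℚ)

/-- `x` is the spanning tree edge dependence of `G`, i.e. the maximum of the
densities of the edges of `G`. -/
def IsDep {V : Type*} (G : SimpleGraph V) (x : ℚ) : Prop :=
  (∃ e ∈ G.edgeSet, density G e = x) ∧ ∀ e ∈ G.edgeSet, density G e ≤ x


/-- `H` is a minor of `G`: there are nonempty, pairwise disjoint branch sets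
`B w ⊆ V(G)`, each inducing a connected subgraph of `G`, such that every edge of
`H` is witnessed by an edge of `G` between the corresponding branch sets. -/
def IsMinor {V W : Type*} (G : SimpleGraph V) (H : SimpleGraph W) : Prop :=
  ∃ B : W → Set V, (∀ w, (B w).Nonempty) ∧
    (∀ w, (G.induce (B w)).Connected) ∧
    (∀ w w', w ≠ w' → Disjoint (B w) (B w')) ∧
    ∀ ⦃w w'⦄, H.Adj w w' → ∃ x ∈ B w, ∃ y ∈ B w', G.Adj x y

/-- A graph is planar iff it has neither `K₅` nor `K₃,₃` as a minor
(Wagner's theorem). -/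
def IsPlanar {V : Type*} (G : SimpleGraph V) : Prop :=
  ¬ IsMinor G (⊤ : SimpleGraph (Fin 5)) ∧
  ¬ IsMinor G (completeBipartiteGraph (Fin 3) (Fin 3))


open Finset

variable {V W : Type*} {G G' : SimpleGraph V} {H : SimpleGraph W}

theorem edgeSet_fromEdgeSet_of_subset {s : Set (Sym2 V)} (hs : s ⊆ G.edgeSet) :
    (fromEdgeSet s).edgeSet = s := by
  rw [edgeSet_fromEdgeSet, sdiff_eq_left, Set.disjoint_left]
  exact fun e he => G.not_isDiag_of_mem_edgeSet (hs he)

theorem exists_le_ncard_edgeSet_eq {k : ℕ} (hk : k ≤ G.edgeSet.ncard) :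
    ∃ G' ≤ G, G'.edgeSet.ncard = k := by
  obtain ⟨t, hts, htk⟩ := Set.exists_subset_card_eq hk
  refine ⟨fromEdgeSet t, ?_, by rw [edgeSet_fromEdgeSet_of_subset hts, htk]⟩
  rw [← edgeSet_subset_edgeSet, edgeSet_fromEdgeSet_of_subset hts]
  exact hts

section Support

variable [Fintype V] [DecidableRel G.Adj] {s : Finset V}

theorem sum_degree_eq_of_support (hs : ∀ ⦃x y⦄, G.Adj x y → x ∈ s) :
    ∑ x ∈ s, G.degree x = 2 * G.edgeSet.ncard := by
  classical
  rw [← coe_edgeFinset, Set.ncard_coe_finset, ← sum_degrees_eq_twice_card_edges]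
  refine sum_subset (subset_univ s) fun x _ hx => ?_
  rw [← card_neighborFinset_eq_degree, card_eq_zero, eq_empty_iff_forall_notMem]
  exact fun y hy => hx (hs ((mem_neighborFinset _ _ _).1 hy))

theorem degree_le_card_sub_one_of_support [DecidableEq V]
    (hs : ∀ ⦃x y⦄, G.Adj x y → x ∈ s) {x : V} (hx : x ∈ s) : G.degree x ≤ #s - 1 := by
  rw [← card_neighborFinset_eq_degree, ← card_erase_of_mem hx]
  refine card_le_card fun y hy => ?_
  rw [mem_neighborFinset] at hy
  exact mem_erase.2 ⟨hy.ne', hs hy.symm⟩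

end Support

theorem IsMinor.mono (hle : G ≤ G') (h : IsMinor G H) : IsMinor G' H := by
  obtain ⟨B, hne, hconn, hdisj, hadj⟩ := h
  refine ⟨B, hne, fun w => (hconn w).mono fun _ _ hab => hle hab, hdisj, fun w w' hww' => ?_⟩
  obtain ⟨x, hx, y, hy, hxy⟩ := hadj hww'
  exact ⟨x, hx, y, hy, hle hxy⟩

theorem isMinor_of_isContained (h : H ⊑ G) : IsMinor G H := by
  obtain ⟨f⟩ := h
  refine ⟨fun w => {f w}, fun w => Set.singleton_nonempty _, fun w => ?_,
    fun w w' hww' => Set.disjoint_singleton.2 (f.injective.ne hww'),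
    fun w w' hww' => ⟨f w, rfl, f w', rfl, f.toHom.map_adj hww'⟩⟩
  have : Nonempty ({f w} : Set V) := ⟨⟨f w, rfl⟩⟩
  exact Connected.of_subsingleton

theorem isMinor_top_of_isNClique {n : ℕ} {s : Finset V} (h : G.IsNClique n s) :
    IsMinor G (⊤ : SimpleGraph (Fin n)) :=
  isMinor_of_isContained ((not_cliqueFree_iff_top_isContained n).1 h.not_cliqueFree)

/-- The contraction keeps the vertex type: the edges of `v` are moved to `u` and `v` is left
isolated. -/
def contractEdge (G : SimpleGraph V) (u v : V) : SimpleGraph V where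
  Adj x y := x ≠ y ∧ x ≠ v ∧ y ≠ v ∧
    (G.Adj x y ∨ (x = u ∧ G.Adj v y) ∨ (y = u ∧ G.Adj v x))
  symm := ⟨by
    rintro x y ⟨hxy, hx, hy, h | h | h⟩
    · exact ⟨hxy.symm, hy, hx, Or.inl h.symm⟩
    · exact ⟨hxy.symm, hy, hx, Or.inr (Or.inr h)⟩
    · exact ⟨hxy.symm, hy, hx, Or.inr (Or.inl h)⟩⟩
  loopless := ⟨fun _ h => h.1 rfl⟩

theorem not_contractEdge_adj {u v x : V} : ¬(contractEdge G u v).Adj v x :=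
  fun h => h.2.1 rfl

theorem connected_induce_insert_of_contractEdge {u v : V} {s : Set V} (huv : G.Adj u v)
    (hu : u ∈ s) (h : ((contractEdge G u v).induce s).Connected) :
    (G.induce (insert v s)).Connected := by
  let ι : s → (insert v s : Set V) := fun z => ⟨z, Or.inr z.2⟩
  let v' : (insert v s : Set V) := ⟨v, Set.mem_insert v s⟩
  have hlift : ∀ x y, (G.induce (insert v s)).Reachable (ι x) (ι y) := by
    intro x y
    have hxy := (reachable_iff_reflTransGen x y).1 (h.preconnected x y)
    rw [reachable_iff_reflTransGen]
    refine Relation.ReflTransGen.lift' ι ?_ x y hxy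
    rintro ⟨a, ha⟩ ⟨b, hb⟩ ⟨-, -, -, hab | ⟨rfl, hvb⟩ | ⟨rfl, hva⟩⟩
    · exact .single hab
    · exact .tail (.single (b := v') huv) hvb
    · exact .tail (.single (b := v') hva.symm) huv.symm
  rw [connected_iff_exists_forall_reachable]
  refine ⟨ι ⟨u, hu⟩, ?_⟩
  rintro ⟨x, rfl | hx⟩
  · exact Adj.reachable (show G.Adj u x from huv)
  · exact hlift ⟨u, hu⟩ ⟨x, hx⟩

theorem IsMinor.of_contractEdge {u v : V} (huv : G.Adj u v) (hH : ∀ w, ∃ w', H.Adj w w')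
    (h : IsMinor (contractEdge G u v) H) : IsMinor G H := by
  classical
  obtain ⟨B, hne, hconn, hdisj, hadj⟩ := h
  have hv : ∀ w, v ∉ B w := by
    intro w hvw
    obtain ⟨w', hww'⟩ := hH w
    obtain ⟨x, hx, y, -, hxy⟩ := hadj hww'
    have hxv : x ≠ v := by rintro rfl; exact not_contractEdge_adj hxy
    have : Nontrivial (B w) :=
      ⟨⟨⟨v, hvw⟩, ⟨x, hx⟩, fun h => hxv (congrArg Subtype.val h).symm⟩⟩
    obtain ⟨z, hz⟩ := (hconn w).preconnected.exists_adj_of_nontrivial ⟨v, hvw⟩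
    exact not_contractEdge_adj hz
  let B' : W → Set V := fun w => if u ∈ B w then insert v (B w) else B w
  have hB : ∀ w, B w ⊆ B' w := fun w => by
    by_cases hu : u ∈ B w <;> simp [B', hu, Set.subset_insert]
  have hB' : ∀ w x, x ∈ B' w → x ∈ B w ∨ (x = v ∧ u ∈ B w) := fun w x => by
    by_cases hu : u ∈ B w <;> simp [B', hu, or_comm]
  refine ⟨B', fun w => (hne w).mono (hB w), fun w => ?_, fun w w' hww' => ?_,
    fun w w' hww' => ?_⟩
  · by_cases hu : u ∈ B w
    · rw [show B' w = insert v (B w) from if_pos hu]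
      exact connected_induce_insert_of_contractEdge huv hu (hconn w)
    · rw [show B' w = B w from if_neg hu]
      refine (hconn w).mono ?_
      rintro ⟨a, ha⟩ ⟨b, hb⟩ ⟨-, -, -, hab | ⟨rfl, -⟩ | ⟨rfl, -⟩⟩
      · exact hab
      · exact absurd ha hu
      · exact absurd hb hu
  · rw [Set.disjoint_left]
    intro x hx hx'
    rcases hB' w x hx with hx | ⟨rfl, hu⟩ <;> rcases hB' w' x hx' with hx' | ⟨hxv, hu'⟩
    · exact Set.disjoint_left.1 (hdisj w w' hww') hx hx'
    · exact hv w (hxv ▸ hx)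
    · exact hv w' hx'
    · exact Set.disjoint_left.1 (hdisj w w' hww') hu hu'
  · obtain ⟨x, hx, y, hy, -, -, -, hxy | ⟨rfl, hvy⟩ | ⟨rfl, hvx⟩⟩ := hadj hww'
    · exact ⟨x, hB w hx, y, hB w' hy, hxy⟩
    · exact ⟨v, by simp [B', hx], y, hB w' hy, hvy⟩
    · exact ⟨x, hB w hx, v, by simp [B', hy], hvx.symm⟩

/- The edges avoiding `v` survive and each `vy` with `y ≠ u` becomes `uy`; two edges merge only
when `y` is a common neighbour of `u` and `v`. -/
theorem ncard_edgeSet_le_contractEdge [Fintype V] [DecidableRel G.Adj] {u v : V}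
    (huv : G.Adj u v) :
    G.edgeSet.ncard ≤
      (contractEdge G u v).edgeSet.ncard + 1 + #((G.neighborFinset v).filter (G.Adj u)) := by
  classical
  let kept := G.edgeFinset.filter (v ∉ ·)
  let moved := ((G.neighborFinset v).erase u).image (fun y => s(u, y))
  have hkept : #kept = #G.edgeFinset - G.degree v := by
    simp only [kept]
    rw [← edgeFinset_deleteIncidenceSet_eq_filter, card_edgeFinset_deleteIncidenceSet]
  have hmoved : #moved = G.degree v - 1 := by
    rw [card_image_of_injective _ fun y y' h => Sym2.congr_right.1 h,
      card_erase_of_mem (by simpa using huv.symm), card_neighborFinset_eq_degree]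
  have hunion : kept ∪ moved ⊆ (contractEdge G u v).edgeFinset := by
    intro e he
    rw [mem_edgeFinset]
    rcases mem_union.1 he with he | he
    · obtain ⟨he, hve⟩ := mem_filter.1 he
      induction e with | _ x y =>
      rw [mem_edgeFinset, mem_edgeSet] at he
      simp only [Sym2.mem_iff, not_or] at hve
      exact ⟨he.ne, Ne.symm hve.1, Ne.symm hve.2, Or.inl he⟩
    · obtain ⟨y, hy, rfl⟩ := mem_image.1 he
      obtain ⟨hyu, hvy⟩ := mem_erase.1 hy
      rw [mem_neighborFinset] at hvy
      exact ⟨Ne.symm hyu, huv.ne, hvy.ne', Or.inr (Or.inl ⟨rfl, hvy⟩)⟩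
  have hinter :
      kept ∩ moved ⊆ ((G.neighborFinset v).filter (G.Adj u)).image (fun y => s(u, y)) := by
    intro e he
    obtain ⟨he, hmoved⟩ := mem_inter.1 he
    obtain ⟨y, hy, rfl⟩ := mem_image.1 hmoved
    have huy : G.Adj u y := by simpa using (mem_filter.1 he).1
    exact mem_image_of_mem _ (mem_filter.2 ⟨mem_of_mem_erase hy, huy⟩)
  have hsplit := card_union_add_card_inter kept moved
  have h₁ := card_le_card hunion
  have h₂ := (card_le_card hinter).trans card_image_le
  have hdeg := G.degree_le_card_edgeFinset v
  have hdeg₁ : 1 ≤ G.degree v := (G.degree_pos_iff_exists_adj v).2 ⟨u, huv.symm⟩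
  rw [← coe_edgeFinset, Set.ncard_coe_finset, ← coe_edgeFinset, Set.ncard_coe_finset]
  omega

theorem isMinor_top_of_adj_of_isNClique {n : ℕ} {p r : V} {Y : Finset V} (hpr : G.Adj p r)
    (hY : G.IsNClique (n + 1) Y) (hpY : p ∉ Y) (hrY : r ∉ Y)
    (hcover : ∀ y ∈ Y, G.Adj p y ∨ G.Adj r y) :
    IsMinor G (⊤ : SimpleGraph (Fin (n + 2))) := by
  classical
  refine IsMinor.of_contractEdge hpr (fun w => (exists_ne w).imp fun _ h => h.symm)
    (isMinor_top_of_isNClique (s := insert p Y) ?_)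
  refine IsNClique.insert ⟨fun x hx y hy hxy => ?_, hY.card_eq⟩ fun y hy => ?_
  · exact ⟨hxy, ne_of_mem_of_not_mem hx hrY, ne_of_mem_of_not_mem hy hrY,
      Or.inl (hY.isClique hx hy hxy)⟩
  · refine ⟨(ne_of_mem_of_not_mem hy hpY).symm, hpr.ne, ne_of_mem_of_not_mem hy hrY, ?_⟩
    rcases hcover y hy with h | h
    · exact Or.inl h
    · exact Or.inr (Or.inl ⟨rfl, h⟩)

section LocalStructure

variable [DecidableEq V] [DecidableRel G.Adj] {S : Finset V}

theorem adj_of_not_adj_of_card_le {x y z : V} (hS : #S ≤ #(S.filter (G.Adj x)) + 2)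
    (hx : x ∈ S) (hy : y ∈ S) (hz : z ∈ S) (hxy : x ≠ y) (hxz : x ≠ z) (hyz : y ≠ z)
    (hnadj : ¬G.Adj x y) : G.Adj x z := by
  by_contra hnadj'
  have hsub : {x, y, z} ⊆ S.filter (¬G.Adj x ·) := by
    simp [insert_subset_iff, hx, hy, hz, hnadj, hnadj']
  have h₃ : #({x, y, z} : Finset V) = 3 := card_eq_three.2 ⟨x, y, z, hxy, hxz, hyz, rfl⟩
  have := card_filter_add_card_filter_not (s := S) (G.Adj x)
  have := card_le_card hsub
  omega

theorem isClique_of_card_le (hS : ∀ x ∈ S, #S ≤ #(S.filter (G.Adj x)) + 1) :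
    G.IsClique (S : Set V) := by
  intro x hx y hy hxy
  rw [mem_coe] at hx hy
  by_contra hnadj
  have hsub : {x, y} ⊆ S.filter (¬G.Adj x ·) := by simp [insert_subset_iff, hx, hy, hnadj]
  have := card_filter_add_card_filter_not (s := S) (G.Adj x)
  have := card_le_card hsub
  have := hS x hx
  rw [card_pair hxy] at *
  omega

theorem isClique_erase_erase_of_card_le (hS : ∀ x ∈ S, #S ≤ #(S.filter (G.Adj x)) + 2)
    (hS₅ : #S = 5) {p q r s : V} (hp : p ∈ S) (hq : q ∈ S) (hr : r ∈ S) (hs : s ∈ S)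
    (hpq : p ≠ q) (hrs : r ≠ s) (hrp : r ≠ p) (hsp : s ≠ p) (hqr : q ≠ r) (hqs : q ≠ s)
    (hnpq : ¬G.Adj p q) (hnrs : ¬G.Adj r s) :
    G.IsClique (((S.erase p).erase r : Finset V) : Set V) := by
  have hmem : ∀ {x}, x ∈ (S.erase p).erase r ↔ x ≠ r ∧ x ≠ p ∧ x ∈ S := by simp
  have hfar : ∀ {a b}, a ∈ S → b ∈ (S.erase p).erase r → a ≠ b → ¬G.Adj a b →
      a ≠ q ∧ a ≠ s := by
    intro a b ha hb hab hnab
    obtain ⟨hbr, hbp, hb⟩ := hmem.1 hb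
    refine ⟨?_, ?_⟩ <;> rintro rfl
    · exact hnab (adj_of_not_adj_of_card_le (hS a ha) ha hp hb hpq.symm hab hbp.symm
        fun h => hnpq h.symm)
    · exact hnab (adj_of_not_adj_of_card_le (hS a ha) ha hr hb hrs.symm hab hbr.symm
        fun h => hnrs h.symm)
  intro x hx y hy hxy
  rw [mem_coe] at hx hy
  by_contra hnxy
  obtain ⟨hxq, hxs⟩ := hfar (hmem.1 hx).2.2 hy hxy hnxy
  obtain ⟨hyq, hys⟩ := hfar (hmem.1 hy).2.2 hx hxy.symm fun h => hnxy h.symm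
  have h₁ : #((((S.erase p).erase r).erase q).erase s) = 1 := by
    rw [card_erase_of_mem (by simp [hqs.symm, hrs.symm, hsp, hs]),
      card_erase_of_mem (by simp [hqr, hpq.symm, hq]), card_erase_of_mem (by simp [hrp, hr]),
      card_erase_of_mem hp, hS₅]
  exact hxy (card_le_one.1 h₁.le x (mem_erase.2 ⟨hxs, mem_erase.2 ⟨hxq, hx⟩⟩)
    y (mem_erase.2 ⟨hys, mem_erase.2 ⟨hyq, hy⟩⟩))

/- Either all non-edges inside `S` share a vertex `p`, and contracting `pv` gives `K₅`, or `S`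
has two disjoint non-edges `pq`, `rs`, and contracting `pr` turns `{p, v} ∪ S \ {p, r}` into
`K₅`. -/
theorem isMinor_top_five_of_card_eq_five {v : V} (hv : ∀ x ∈ S, G.Adj v x) (hS₅ : #S = 5)
    (hS : ∀ x ∈ S, #S ≤ #(S.filter (G.Adj x)) + 2) : IsMinor G (⊤ : SimpleGraph (Fin 5)) := by
  have hvS : v ∉ S := fun h => G.irrefl (hv v h)
  have key : ∀ {x y z}, x ∈ S → y ∈ S → z ∈ S → x ≠ y → x ≠ z → y ≠ z → ¬G.Adj x y →
      G.Adj x z := fun hx => adj_of_not_adj_of_card_le (hS _ hx) hx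
  by_cases hA : ∃ p ∈ S, ∀ x ∈ S.erase p, ∀ y ∈ S.erase p, x ≠ y → G.Adj x y
  · obtain ⟨p, hp, hclique⟩ := hA
    exact isMinor_top_of_adj_of_isNClique (hv p hp).symm
      ⟨hclique, by rw [card_erase_of_mem hp, hS₅]⟩ (notMem_erase p S)
      (fun h => hvS (mem_of_mem_erase h)) fun y hy => Or.inr (hv y (mem_of_mem_erase hy))
  push Not at hA
  obtain ⟨p₀, hp₀⟩ : S.Nonempty := card_pos.1 (by omega)
  obtain ⟨p, hp, q, hq, hpq, hnpq⟩ := hA p₀ hp₀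
  replace hp := mem_of_mem_erase hp
  replace hq := mem_of_mem_erase hq
  obtain ⟨r, hr, s, hs, hrs, hnrs⟩ := hA p hp
  obtain ⟨hrp, hr⟩ := mem_erase.1 hr
  obtain ⟨hsp, hs⟩ := mem_erase.1 hs
  have hqr : q ≠ r := by
    rintro rfl
    exact hnrs (key hq hp hs hpq.symm hrs hsp.symm fun h => hnpq h.symm)
  have hqs : q ≠ s := by
    rintro rfl
    exact hnrs (key hq hp hr hpq.symm hqr hrp.symm fun h => hnpq h.symm).symm
  set T := (S.erase p).erase r
  have hT : #T = 3 := by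
    rw [card_erase_of_mem (mem_erase.2 ⟨hrp, hr⟩), card_erase_of_mem hp, hS₅]
  have hTS : ∀ {y}, y ∈ T → y ≠ p ∧ y ≠ r ∧ y ∈ S := fun hy => by
    obtain ⟨hyr, hyp, hy⟩ := by simpa [T] using hy
    exact ⟨hyp, hyr, hy⟩
  have hTclique :=
    isClique_erase_erase_of_card_le hS hS₅ hp hq hr hs hpq hrs hrp hsp hqr hqs hnpq hnrs
  refine isMinor_top_of_adj_of_isNClique (key hp hq hr hpq hrp.symm hqr hnpq) (Y := insert v T)
    (IsNClique.insert ⟨hTclique, hT⟩ fun y hy => hv y (hTS hy).2.2) ?_ ?_ fun y hy => ?_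
  · simpa [(hv p hp).ne'] using fun h => (hTS h).1 rfl
  · simpa [(hv r hr).ne'] using fun h => (hTS h).2.1 rfl
  rcases mem_insert.1 hy with rfl | hy
  · exact Or.inl (hv p hp).symm
  by_cases hyq : y = q
  · exact Or.inr (hyq ▸ key hr hs hq hrs hqr.symm hqs.symm hnrs)
  · exact Or.inl (key hp hq (hTS hy).2.2 hpq (hTS hy).1.symm (Ne.symm hyq) hnpq)

end LocalStructure

theorem isMinor_top_five_of_three_le_card_common [Fintype V] [DecidableEq V]
    [DecidableRel G.Adj] {v : V} (hne : (G.neighborFinset v).Nonempty) (hdeg : G.degree v ≤ 5)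
    (hcommon : ∀ u ∈ G.neighborFinset v, 3 ≤ #((G.neighborFinset v).filter (G.Adj u))) :
    IsMinor G (⊤ : SimpleGraph (Fin 5)) := by
  set S := G.neighborFinset v
  have hv : ∀ x ∈ S, G.Adj v x := fun x hx => (mem_neighborFinset _ _ _).1 hx
  have hS : #S = G.degree v := card_neighborFinset_eq_degree G v
  obtain ⟨u, hu⟩ := hne
  have h₄ : 4 ≤ #S := by
    have hsub : S.filter (G.Adj u) ⊆ S.erase u := fun x hx =>
      mem_erase.2 ⟨(mem_filter.1 hx).2.ne', (mem_filter.1 hx).1⟩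
    have := card_le_card hsub
    have := hcommon u hu
    rw [card_erase_of_mem hu] at *
    omega
  rcases (by omega : #S = 4 ∨ #S = 5) with h | h
  · refine isMinor_top_of_isNClique
      (IsNClique.insert ⟨isClique_of_card_le fun x hx => ?_, h⟩ hv)
    have := hcommon x hx
    omega
  · exact isMinor_top_five_of_card_eq_five hv h fun x hx => by have := hcommon x hx; omega

theorem isMinor_top_five_of_three_mul_card_le [Fintype V] (s : Finset V) (G : SimpleGraph V)
    (hs : ∀ ⦃x y⦄, G.Adj x y → x ∈ s) (h₂ : 2 ≤ #s) (hm : 3 * #s ≤ G.edgeSet.ncard + 3) :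
    IsMinor G (⊤ : SimpleGraph (Fin 5)) := by
  classical
  induction s using Finset.strongInduction generalizing G with | H s ih =>
  -- With exactly `3 * #s - 3` edges the average degree is below `6`.
  obtain ⟨G₁, hle, hm₁⟩ := exists_le_ncard_edgeSet_eq (G := G) (k := 3 * #s - 3) (by omega)
  refine IsMinor.mono hle ?_
  have hs₁ : ∀ ⦃x y⦄, G₁.Adj x y → x ∈ s := fun x y h => hs (hle h)
  have hsum := sum_degree_eq_of_support hs₁
  have h₆ : 6 ≤ #s := by
    have := sum_le_card_nsmul s _ _ fun x hx => degree_le_card_sub_one_of_support hs₁ hx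
    rw [hsum, hm₁, smul_eq_mul] at this
    rcases Nat.lt_or_ge #s 6 with h | h
    · interval_cases #s <;> omega
    · exact h
  obtain ⟨v, hv, hdeg⟩ : ∃ v ∈ s, G₁.degree v < 6 := by
    refine exists_lt_of_sum_lt (f := fun x => G₁.degree x) (g := fun _ => 6) ?_
    rw [hsum, hm₁, sum_const, smul_eq_mul]
    omega
  have herase : #(s.erase v) = #s - 1 := card_erase_of_mem hv
  by_cases hc : ∃ u ∈ G₁.neighborFinset v, #((G₁.neighborFinset v).filter (G₁.Adj u)) ≤ 2
  · obtain ⟨u, hu, hcu⟩ := hc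
    have huv : G₁.Adj u v := ((mem_neighborFinset _ _ _).1 hu).symm
    have hm₂ := ncard_edgeSet_le_contractEdge huv
    refine IsMinor.of_contractEdge huv (fun w => (exists_ne w).imp fun _ h => h.symm)
      (ih _ (erase_ssubset hv) _ ?_ (by omega) (by omega))
    rintro x y ⟨-, hxv, -, h | ⟨rfl, -⟩ | ⟨-, h⟩⟩
    · exact mem_erase.2 ⟨hxv, hs₁ h⟩
    · exact mem_erase.2 ⟨hxv, hs₁ huv⟩
    · exact mem_erase.2 ⟨hxv, hs₁ h.symm⟩
  push Not at hc
  rcases (G₁.neighborFinset v).eq_empty_or_nonempty with hN | hN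
  · refine ih _ (erase_ssubset hv) _ (fun x y h => mem_erase.2 ⟨?_, hs₁ h⟩) (by omega)
      (by omega)
    rintro rfl
    exact eq_empty_iff_forall_notMem.1 hN y ((mem_neighborFinset _ _ _).2 h)
  · exact isMinor_top_five_of_three_le_card_common hN (by omega) hc

theorem IsSpanningTree.ncard_eq [Fintype V] {T : Set (Sym2 V)} (hT : IsSpanningTree G T) :
    T.ncard = Fintype.card V - 1 := by
  classical
  have hcard := hT.2.card_edgeFinset
  rw [← Set.ncard_coe_finset, coe_edgeFinset, edgeSet_fromEdgeSet_of_subset hT.1] at hcard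
  omega

theorem sum_tauEdge_eq [Fintype V] [DecidableRel G.Adj] :
    ∑ e ∈ G.edgeFinset, tauEdge G e = tau G * (Fintype.card V - 1) := by
  classical
  let trees := (Set.toFinite {T : Set (Sym2 V) | IsSpanningTree G T}).toFinset
  have htau : tau G = #trees := Set.ncard_eq_toFinset_card _ _
  have htauEdge : ∀ e, tauEdge G e = #(trees.filter (e ∈ ·)) := fun e => by
    rw [tauEdge, ← Set.ncard_coe_finset]
    congr 1
    ext T
    simp [trees]
  calc ∑ e ∈ G.edgeFinset, tauEdge G e
      = ∑ e ∈ G.edgeFinset, ∑ T ∈ trees, if e ∈ T then 1 else 0 := by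
        simp only [htauEdge, card_filter]
    _ = ∑ T ∈ trees, #(G.edgeFinset.filter (· ∈ T)) := by
        rw [sum_comm]
        simp only [card_filter]
    _ = ∑ _T ∈ trees, (Fintype.card V - 1) := sum_congr rfl fun T hT => by
        have hT : IsSpanningTree G T := by simpa [trees] using hT
        rw [← hT.ncard_eq, ← Set.ncard_coe_finset, coe_filter]
        congr 1
        ext e
        simpa using fun he => hT.1 he
    _ = tau G * (Fintype.card V - 1) := by rw [sum_const, smul_eq_mul, htau]

theorem tau_pos_of_connected [Finite V] (h : G.Connected) : 0 < tau G := by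
  obtain ⟨T, hle, hT⟩ := h.exists_isTree_le
  exact (Set.ncard_pos (Set.toFinite _)).2
    ⟨T.edgeSet, edgeSet_mono hle, by rwa [fromEdgeSet_edgeSet]⟩

theorem card_sub_one_le_mul_card_edgeFinset [Fintype V] [DecidableRel G.Adj] (hτ : tau G ≠ 0)
    {x : ℚ} (hx : ∀ e ∈ G.edgeSet, density G e ≤ x) :
    ((Fintype.card V - 1 : ℕ) : ℚ) ≤ x * #G.edgeFinset := by
  have hsum : ∑ e ∈ G.edgeFinset, density G e = ((Fintype.card V - 1 : ℕ) : ℚ) := by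
    simp only [density, ← sum_div]
    rw [← Nat.cast_sum, sum_tauEdge_eq, Nat.cast_mul,
      mul_div_cancel_left₀ _ (by exact_mod_cast hτ)]
  rw [← hsum, mul_comm, ← nsmul_eq_mul, ← sum_const]
  exact sum_le_sum fun e he => hx e (mem_edgeFinset.1 he)

theorem no_planar_dep_le_third_general (p q : ℕ)
    (h : (p : ℚ) / q ≤ 1/3) :
    ¬ ∃ (n : ℕ) (G : SimpleGraph (Fin n)),
        G.Connected ∧ IsPlanar G ∧ IsDep G ((p : ℚ) / q) := by
  classical
  rintro ⟨n, G, hconn, hplanar, ⟨e, he, -⟩, hdep⟩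
  have hm : 3 * (n - 1) ≤ #G.edgeFinset := by
    have hfoster := card_sub_one_le_mul_card_edgeFinset (tau_pos_of_connected hconn).ne'
      fun e he => (hdep e he).trans h
    rw [Fintype.card_fin] at hfoster
    have : ((3 * (n - 1) : ℕ) : ℚ) ≤ #G.edgeFinset := by push_cast; linarith
    exact_mod_cast this
  have h₂ : 2 ≤ n := by
    induction e with | _ x y =>
    have := Fintype.one_lt_card_iff_nontrivial.2 ⟨x, y, ((mem_edgeSet G).1 he).ne⟩
    simpa [Nat.succ_le_iff] using this
  refine hplanar.1 (isMinor_top_five_of_three_mul_card_le univ G (fun x _ _ => mem_univ x)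
    (by simpa) ?_)
  rw [← coe_edgeFinset, Set.ncard_coe_finset, card_univ, Fintype.card_fin]
  omega

/-- No rational p/q with p/q at most 1/3 is the spanning tree edge dependence of a simple
connected planar graph. -/
theorem no_planar_dep_le_third (p q : ℕ) (hp : 0 < p) (hpq : p < q)
    (h : (p : ℚ) / q ≤ 1/3) :
    ¬ ∃ (n : ℕ) (G : SimpleGraph (Fin n)),
        G.Connected ∧ IsPlanar G ∧ IsDep G ((p : ℚ) / q) :=
  no_planar_dep_le_third_general p q h

end STED
end

section
/- Let H_r be the graph on vertices u, v consisting of the edge e = uv together with r internally disjoint paths of length 2 from u to v. Then τ(H_r) = 2^{r−1}(r + 2), and the density of the edge uv is d_{H_r}(uv) = 2/(r + 2). -/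
/-!
A spanning tree of `H_r` has `r + 1` edges and reaches every midpoint, so it contains one edge
at each midpoint plus exactly one further edge: either `uv`, or the second edge at some midpoint
`w_i`. Conversely all these edge sets are spanning trees. Hence `2 ^ r` spanning trees contain
`uv` and `r * 2 ^ (r - 1)` do not.
-/

open SimpleGraph

namespace STED

/-- \`H r\`: two vertices \`u = inl 0\`, \`v = inl 1\` joined by the edge \`uv\` and by
\`r\` internally disjoint paths of length 2 (through the midpoints \`inr i\`). -/
def pathsGraph (r : ℕ) : SimpleGraph (Fin 2 ⊕ Fin r) :=
  SimpleGraph.fromEdgeSet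
    ({s(Sum.inl 0, Sum.inl 1)} ∪
      ⋃ i : Fin r, {s(Sum.inl 0, Sum.inr i), s(Sum.inl 1, Sum.inr i)})

theorem isSpanningTree_iff_connected_and_ncard {V : Type*} [Finite V] {G : SimpleGraph V}
    {T : Set (Sym2 V)} :
    IsSpanningTree G T ↔ T ⊆ G.edgeSet ∧ (fromEdgeSet T).Connected ∧ T.ncard + 1 = Nat.card V := by
  refine and_congr_right fun hT => ?_
  have hedges : (fromEdgeSet T).edgeSet = T := by
    rw [edgeSet_fromEdgeSet, sdiff_eq_left]
    exact Set.subset_compl_iff_disjoint_right.1 (hT.trans G.edgeSet_subset_compl_diagSet)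
  rw [isTree_iff_connected_and_card, hedges, Nat.card_coe_set_eq]

variable {r : ℕ}

theorem natCard_fin_two_sum_fin : Nat.card (Fin 2 ⊕ Fin r) = r + 2 := by
  rw [Nat.card_sum, Nat.card_fin, Nat.card_fin, add_comm]

theorem mem_edgeSet_pathsGraph {e : Sym2 (Fin 2 ⊕ Fin r)} :
    e ∈ (pathsGraph r).edgeSet ↔
      e = s(Sum.inl 0, Sum.inl 1) ∨ ∃ a i, e = s(Sum.inl a, Sum.inr i) := by
  rw [pathsGraph, edgeSet_fromEdgeSet]
  constructor
  · rintro ⟨h, -⟩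
    simpa [Fin.exists_fin_two, exists_or] using h
  · rintro (rfl | ⟨a, i, rfl⟩)
    · simp
    · fin_cases a <;> simp

def spokes (f : Fin r → Fin 2) : Set (Sym2 (Fin 2 ⊕ Fin r)) :=
  Set.range fun i => s(Sum.inl (f i), Sum.inr i)

theorem mem_spokes {f : Fin r → Fin 2} {a : Fin 2} {i : Fin r} :
    s(Sum.inl a, Sum.inr i) ∈ spokes f ↔ f i = a := by
  simp [spokes]

theorem hubEdge_notMem_spokes (f : Fin r → Fin 2) : s(Sum.inl 0, Sum.inl 1) ∉ spokes f := by
  simp [spokes]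

theorem ncard_spokes (f : Fin r → Fin 2) : (spokes f).ncard = r := by
  rw [spokes, Set.ncard_range_of_injective, Nat.card_eq_fintype_card, Fintype.card_fin]
  intro i j h
  exact (by simpa using h : f i = f j ∧ i = j).2

theorem spokes_subset_edgeSet (f : Fin r → Fin 2) : spokes f ⊆ (pathsGraph r).edgeSet := by
  rintro _ ⟨i, rfl⟩
  exact mem_edgeSet_pathsGraph.2 (Or.inr ⟨f i, i, rfl⟩)

theorem connected_of_spokes_subset {f : Fin r → Fin 2} {T : Set (Sym2 (Fin 2 ⊕ Fin r))}
    (hf : spokes f ⊆ T) (huv : (fromEdgeSet T).Reachable (Sum.inl 0) (Sum.inl 1)) :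
    (fromEdgeSet T).Connected := by
  have hends : ∀ a, (fromEdgeSet T).Reachable (Sum.inl 0) (Sum.inl a) := by
    intro a
    fin_cases a
    exacts [.rfl, huv]
  refine (connected_iff_exists_forall_reachable _).2 ⟨Sum.inl 0, ?_⟩
  rintro (a | i)
  · exact hends a
  · refine (hends (f i)).trans (Adj.reachable ?_)
    exact (fromEdgeSet_adj T).2 ⟨hf ⟨i, rfl⟩, by simp⟩

/-- Codes of the spanning trees of `pathsGraph r`; in the tree coded by `inr ⟨i, f⟩` the
midpoint `inr i` is joined to both `u` and `v`. -/
abbrev TreeCode (r : ℕ) := (Fin r → Fin 2) ⊕ Σ i : Fin r, {f : Fin r → Fin 2 // f i = 0}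

def TreeCode.edges : TreeCode r → Set (Sym2 (Fin 2 ⊕ Fin r))
  | .inl f => insert s(Sum.inl 0, Sum.inl 1) (spokes f)
  | .inr ⟨i, f⟩ => insert s(Sum.inl 1, Sum.inr i) (spokes f.1)

theorem TreeCode.isSpanningTree_edges (c : TreeCode r) :
    IsSpanningTree (pathsGraph r) c.edges := by
  rw [isSpanningTree_iff_connected_and_ncard]
  rcases c with f | ⟨i, f, hf⟩
  · refine ⟨Set.insert_subset (mem_edgeSet_pathsGraph.2 (Or.inl rfl)) (spokes_subset_edgeSet f),
      connected_of_spokes_subset (Set.subset_insert _ _) (Adj.reachable ?_), ?_⟩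
    · exact (fromEdgeSet_adj _).2 ⟨Set.mem_insert _ _, by simp⟩
    · rw [edges, Set.ncard_insert_of_notMem (hubEdge_notMem_spokes f), ncard_spokes,
        natCard_fin_two_sum_fin]
  · have hvi : s(Sum.inl 1, Sum.inr i) ∉ spokes f := by rw [mem_spokes, hf]; simp
    refine ⟨Set.insert_subset (mem_edgeSet_pathsGraph.2 (Or.inr ⟨1, i, rfl⟩))
      (spokes_subset_edgeSet f), connected_of_spokes_subset (Set.subset_insert _ _) ?_, ?_⟩
    · have hu : (fromEdgeSet (edges (.inr ⟨i, f, hf⟩))).Adj (Sum.inl 0) (Sum.inr i) :=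
        (fromEdgeSet_adj _).2 ⟨Set.mem_insert_of_mem _ (mem_spokes.2 hf), by simp⟩
      have hv : (fromEdgeSet (edges (.inr ⟨i, f, hf⟩))).Adj (Sum.inr i) (Sum.inl 1) :=
        (fromEdgeSet_adj _).2 ⟨by rw [Sym2.eq_swap]; exact Set.mem_insert _ _, by simp⟩
      exact hu.reachable.trans hv.reachable
    · rw [edges, Set.ncard_insert_of_notMem hvi, ncard_spokes, natCard_fin_two_sum_fin]

theorem TreeCode.exists_edges_eq {T : Set (Sym2 (Fin 2 ⊕ Fin r))}
    (hT : IsSpanningTree (pathsGraph r) T) : ∃ c : TreeCode r, c.edges = T := by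
  classical
  obtain ⟨hsub, hconn, hcard⟩ := isSpanningTree_iff_connected_and_ncard.1 hT
  have hmid : ∀ i, ∃ a, s(Sum.inl a, Sum.inr i) ∈ T := by
    intro i
    obtain ⟨p⟩ := hconn.preconnected (Sum.inr i) (Sum.inl 0)
    obtain ⟨x | j, hx⟩ : ∃ x, (fromEdgeSet T).Adj (Sum.inr i) x :=
      ⟨_, p.adj_snd (p.not_nil_of_ne (by simp))⟩
    · exact ⟨x, by simpa [Sym2.eq_swap] using ((fromEdgeSet_adj T).1 hx).1⟩
    · have := mem_edgeSet_pathsGraph.1 (hsub ((fromEdgeSet_adj T).1 hx).1)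
      simp at this
  -- Preferring `u` leaves, besides `uv`, only edges `v (inr i)` with `f i = 0` outside `spokes f`.
  let f : Fin r → Fin 2 := fun i => if s(Sum.inl 0, Sum.inr i) ∈ T then 0 else 1
  have hf : spokes f ⊆ T := by
    rintro _ ⟨i, rfl⟩
    by_cases h : s(Sum.inl 0, Sum.inr i) ∈ T
    · simp [f, h]
    · obtain ⟨a, ha⟩ := hmid i
      obtain rfl | rfl : a = 0 ∨ a = 1 := by omega
      exacts [absurd ha h, by simpa [f, h] using ha]
  obtain ⟨e, he, hT⟩ : ∃ e ∉ spokes f, insert e (spokes f) = T := by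
    refine (Set.exists_eq_insert_iff_ncard (Set.toFinite _)).2 ⟨hf, ?_⟩
    rw [natCard_fin_two_sum_fin] at hcard
    rw [ncard_spokes]
    omega
  have heT : e ∈ T := hT ▸ Set.mem_insert _ _
  rcases mem_edgeSet_pathsGraph.1 (hsub heT) with rfl | ⟨a, i, rfl⟩
  · exact ⟨.inl f, hT⟩
  · have hfi : f i ≠ a := mem_spokes.not.1 he
    obtain rfl | rfl : a = 0 ∨ a = 1 := by omega
    · simp [f, heT] at hfi
    · exact ⟨.inr ⟨i, f, by omega⟩, hT⟩

theorem TreeCode.hubEdge_mem_edges_iff (c : TreeCode r) :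
    s(Sum.inl 0, Sum.inl 1) ∈ c.edges ↔ c.isLeft := by
  rcases c with f | ⟨i, f, hf⟩
  · simp [edges]
  · simp [edges, hubEdge_notMem_spokes]

theorem TreeCode.edges_injective : Function.Injective (edges : TreeCode r → _) := by
  have hspokes : ∀ {f g : Fin r → Fin 2}, (∀ k, f k = 0 ↔ g k = 0) → f = g :=
    fun h => funext fun k => by have := h k; omega
  rintro (f | ⟨i, f, hf⟩) (g | ⟨j, g, hg⟩) h <;> have h := Set.ext_iff.1 h
  · congr 1
    exact hspokes fun k => by simpa [edges, mem_spokes] using h s(Sum.inl 0, Sum.inr k)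
  · simpa [hubEdge_mem_edges_iff] using h s(Sum.inl 0, Sum.inl 1)
  · simpa [hubEdge_mem_edges_iff] using h s(Sum.inl 0, Sum.inl 1)
  · obtain rfl : f = g :=
      hspokes fun k => by simpa [edges, mem_spokes] using h s(Sum.inl 0, Sum.inr k)
    obtain rfl : i = j := by simpa [edges, mem_spokes, hf] using h s(Sum.inl 1, Sum.inr i)
    rfl

theorem card_fun_apply_eq {ι α : Type*} [Fintype ι] [DecidableEq ι] [Fintype α] [DecidableEq α]
    (i : ι) (a : α) :
    Fintype.card {f : ι → α // f i = a} = Fintype.card α ^ (Fintype.card ι - 1) := by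
  have := Fintype.card_filter_piFinset_const_eq_of_mem Finset.univ i (Finset.mem_univ a)
  rw [Fintype.piFinset_univ] at this
  rw [Fintype.card_subtype, this, Finset.card_univ]

theorem card_treeCode : Fintype.card (TreeCode r) = 2 ^ r + r * 2 ^ (r - 1) := by
  simp [card_fun_apply_eq]

theorem setOf_isSpanningTree_pathsGraph :
    {T | IsSpanningTree (pathsGraph r) T} = Set.range TreeCode.edges :=
  Set.ext fun _ => ⟨TreeCode.exists_edges_eq, by rintro ⟨c, rfl⟩; exact c.isSpanningTree_edges⟩

theorem tau_pathsGraph : tau (pathsGraph r) = 2 ^ r + r * 2 ^ (r - 1) := by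
  rw [tau, setOf_isSpanningTree_pathsGraph,
    Set.ncard_range_of_injective TreeCode.edges_injective, Nat.card_eq_fintype_card,
    card_treeCode]

theorem tauEdge_pathsGraph_hubEdge : tauEdge (pathsGraph r) s(Sum.inl 0, Sum.inl 1) = 2 ^ r := by
  have hrange : {T | IsSpanningTree (pathsGraph r) T ∧ s(Sum.inl 0, Sum.inl 1) ∈ T} =
      Set.range (TreeCode.edges ∘ Sum.inl) := by
    ext T
    constructor
    · rintro ⟨hT, huv⟩
      obtain ⟨f | c, rfl⟩ := TreeCode.exists_edges_eq hT
      · exact ⟨f, rfl⟩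
      · simp [TreeCode.hubEdge_mem_edges_iff] at huv
    · rintro ⟨f, rfl⟩
      exact ⟨TreeCode.isSpanningTree_edges (.inl f), (TreeCode.hubEdge_mem_edges_iff _).2 rfl⟩
  rw [tauEdge, hrange,
    Set.ncard_range_of_injective (TreeCode.edges_injective.comp Sum.inl_injective)]
  simp

/-- `τ(H r) = 2^(r-1)(r+2)` and the key edge `uv` of `H r` has density `2/(r+2)`. -/
theorem tau_and_density_pathsGraph (r : ℕ) (hr : 1 ≤ r) :
    tau (pathsGraph r) = 2 ^ (r - 1) * (r + 2) ∧
    density (pathsGraph r) s(Sum.inl 0, Sum.inl 1) = 2 / ((r : ℚ) + 2) := by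
  obtain ⟨k, rfl⟩ := Nat.exists_eq_add_of_le' hr
  have htau : tau (pathsGraph (k + 1)) = 2 ^ k * (k + 3) := by
    rw [tau_pathsGraph, Nat.add_sub_cancel]
    ring
  refine ⟨by rw [htau, Nat.add_sub_cancel], ?_⟩
  rw [density, tauEdge_pathsGraph_hubEdge, htau]
  push_cast
  field_simp
  ring

end STED
end
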